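/- For all integers n ≥ 3 and k ≥ 1, the Lucas–Coxeter–Fuss–Catalan analogue for the Coxeter group D_n, namely ({2k(n-1)+n}/{n}) · Π_{i=1}^{n-1} {2k(n-1)+2i}/{2i} = ({(2k+1)n-2k}/{n}) · {(k+1)(n-1):2 choose n-1:2}_L, is a polynomial in s and t all of whose coefficients are nonnegative integers. -/

import Mathlib

open MvPolynomial Finset

noncomputable section

/-- Polynomial ring ℤ[s,t] with s = X 0, t = X 1. -/
abbrev P2 : Type := MvPolynomial (Fin 2) ℤ

def ps : P2 := X 0
def pt : P2 := X 1

/-- The Lucas sequence of polynomials: {0}=0, {1}=1, {n}=s{n-1}+t{n-2}. -/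
def lucas : ℕ → P2
  | 0 => 0
  | 1 => 1
  | (n+2) => ps * lucas (n+1) + pt * lucas n

/-- The Lucastorial {n}! = {1}{2}⋯{n}. -/
def lucasFact (n : ℕ) : P2 := ∏ i ∈ Finset.range n, lucas (i+1)

/-- The d-divisible Lucastorial {n:d}! = {d}{2d}⋯{nd}. -/
def lucasFactD (d n : ℕ) : P2 := ∏ i ∈ Finset.range n, lucas (d*(i+1))

/-- A polynomial lies in ℕ[s,t]: all coefficients are nonnegative. -/
def Nonneg (p : P2) : Prop := ∀ m, 0 ≤ p.coeff m

/-- The fraction field ℤ(s,t). -/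
abbrev K : Type := FractionRing P2

def φ : P2 →+* K := algebraMap P2 K

def L (n : ℕ) : K := φ (lucas n)

def LFact (n : ℕ) : K := φ (lucasFact n)

def LFactD (d n : ℕ) : K := φ (lucasFactD d n)

/-- The Lucasnomial {n choose k}, as an element of the fraction field. -/
def lnom (n k : ℕ) : K := LFact n / (LFact k * LFact (n-k))

/-- The d-divisible Lucasnomial {n:d choose k:d}, as an element of the fraction field. -/
def lnomD (d n k : ℕ) : K := LFactD d n / (LFactD d k * LFactD d (n-k))

/-- The Lucas-Catalan number C_{n} = (1/{n+1}) {2n choose n}. -/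
def catL (n : ℕ) : K := lnom (2*n) n / L (n+1)

/-- The Lucas-Fuss-Catalan number C_{n,k} = (1/{kn+1}) {(k+1)n choose n}. -/
def fussCatL (n k : ℕ) : K := lnom ((k+1)*n) n / L (k*n+1)


/-! Put `m = n - 1` and `K = k m ≥ 1`. The product telescopes to the 2-divisible Lucasnomial
`{K+m:2 choose m:2}`, and every d-divisible Lucasnomial lies in `ℕ[s,t]` by a Pascal-type
recursion coming from the addition formula `{x+y+1} = {x+1}{y+1} + t{x}{y}`. The extra factor
`{2K+m+1}/{m+1}` is absorbed by splitting `{2K+m+1} = {2K+1}{m+1} + t{2K}{m}` and using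
`{2K} {K+m:2 choose m:2} = {2m+2} {K+m:2 choose m+1:2}` with `{2m+2} = {m+1}({m+2} + t{m})`. -/

theorem lucas_add_two (n : ℕ) : lucas (n + 2) = ps * lucas (n + 1) + pt * lucas n := rfl

theorem lucas_add_succ (a b : ℕ) :
    lucas (a + b + 1) = lucas (a + 1) * lucas (b + 1) + pt * lucas a * lucas b := by
  induction a using Nat.twoStepInduction generalizing b with
  | zero => simp [lucas]
  | one => rw [add_comm 1 b, lucas_add_two, lucas_add_two]; simp [lucas]
  | more a ih₁ ih₂ =>
    linear_combination (norm := ring_nf) lucas_add_two (a + b + 1) + ps * ih₂ b + pt * ih₁ b -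
      lucas (b + 1) * lucas_add_two (a + 1) - pt * lucas b * lucas_add_two a

theorem eval_one_lucas (n : ℕ) : eval (fun _ => 1) (lucas n) = Nat.fib n := by
  induction n using Nat.twoStepInduction with
  | zero => simp [lucas]
  | one => simp [lucas]
  | more n ih₁ ih₂ => simp [lucas_add_two, ps, pt, ih₁, ih₂, Nat.fib_add_two, add_comm]

theorem lucas_ne_zero {n : ℕ} (hn : n ≠ 0) : lucas n ≠ 0 := fun h => by
  have hfib := eval_one_lucas n
  rw [h, map_zero, eq_comm, Nat.cast_eq_zero, Nat.fib_eq_zero] at hfib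
  exact hn hfib

theorem lucasFactD_succ (d n : ℕ) : lucasFactD d (n + 1) = lucasFactD d n * lucas (d * (n + 1)) :=
  prod_range_succ _ _

theorem lucasFactD_ne_zero {d : ℕ} (hd : d ≠ 0) (n : ℕ) : lucasFactD d n ≠ 0 :=
  prod_ne_zero_iff.mpr fun i _ => lucas_ne_zero (mul_ne_zero hd i.succ_ne_zero)

def nonnegSubsemiring : Subsemiring P2 where
  carrier := {p | Nonneg p}
  zero_mem' := fun m => by simp
  one_mem' := fun m => by rw [coeff_one]; split <;> norm_num
  add_mem' := fun hp hq m => by rw [coeff_add]; exact add_nonneg (hp m) (hq m)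
  mul_mem' := fun hp hq m => by
    rw [coeff_mul]; exact sum_nonneg fun x _ => mul_nonneg (hp x.1) (hq x.2)

theorem X_mem_nonnegSubsemiring (i : Fin 2) : (X i : P2) ∈ nonnegSubsemiring := fun m => by
  rw [coeff_X]; split <;> norm_num

theorem lucas_mem_nonnegSubsemiring (n : ℕ) : lucas n ∈ nonnegSubsemiring := by
  induction n using Nat.twoStepInduction with
  | zero => exact zero_mem _
  | one => exact one_mem _
  | more n ih₁ ih₂ =>
    exact add_mem (mul_mem (X_mem_nonnegSubsemiring 0) ih₂) (mul_mem (X_mem_nonnegSubsemiring 1) ih₁)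

/-- `{a+b:d choose a:d}` as a polynomial; the recursion mirrors
`{d(a+b+2)} = {d(b+1)+1}{d(a+1)} + t{d(b+1)}{d(a+1)-1}`. -/
def lucasnomialPoly (d : ℕ) : ℕ → ℕ → P2
  | 0, _ => 1
  | _ + 1, 0 => 1
  | a + 1, b + 1 => lucas (d * (b + 1) + 1) * lucasnomialPoly d a (b + 1) +
      pt * lucas (d * (a + 1) - 1) * lucasnomialPoly d (a + 1) b

theorem lucasnomialPoly_mem_nonnegSubsemiring (d : ℕ) :
    ∀ a b, lucasnomialPoly d a b ∈ nonnegSubsemiring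
  | 0, _ => by rw [lucasnomialPoly]; exact one_mem _
  | _ + 1, 0 => by rw [lucasnomialPoly]; exact one_mem _
  | a + 1, b + 1 => by
    rw [lucasnomialPoly]
    exact add_mem
      (mul_mem (lucas_mem_nonnegSubsemiring _) (lucasnomialPoly_mem_nonnegSubsemiring d a (b + 1)))
      (mul_mem (mul_mem (X_mem_nonnegSubsemiring 1) (lucas_mem_nonnegSubsemiring _))
        (lucasnomialPoly_mem_nonnegSubsemiring d (a + 1) b))

theorem lucasnomialPoly_mul_lucasFactD {d : ℕ} (hd : d ≠ 0) :
    ∀ a b, lucasnomialPoly d a b * lucasFactD d a * lucasFactD d b = lucasFactD d (a + b)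
  | 0, b => by simp [lucasnomialPoly, lucasFactD]
  | a + 1, 0 => by simp [lucasnomialPoly, lucasFactD]
  | a + 1, b + 1 => by
    obtain ⟨y, hy⟩ : ∃ y, d * (a + 1) = y + 1 :=
      Nat.exists_eq_add_one.mpr (Nat.mul_pos (Nat.pos_of_ne_zero hd) a.succ_pos)
    have hrow := lucasnomialPoly_mul_lucasFactD hd a (b + 1)
    have hcol := lucasnomialPoly_mul_lucasFactD hd (a + 1) b
    have hsplit := lucas_add_succ (d * (b + 1)) y
    rw [lucasFactD_succ d a, hy] at hcol
    rw [lucasFactD_succ d b] at hrow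
    rw [lucasnomialPoly, hy, Nat.add_sub_cancel, lucasFactD_succ d a, lucasFactD_succ d b, hy,
      show a + 1 + (b + 1) = a + b + 1 + 1 by omega, lucasFactD_succ,
      show d * (a + b + 1 + 1) = d * (b + 1) + y + 1 by linarith]
    linear_combination (norm := ring_nf) lucas (d * (b + 1) + 1) * lucas (y + 1) * hrow +
      pt * lucas y * lucas (d * (b + 1)) * hcol - lucasFactD d (a + b + 1) * hsplit

theorem prod_Icc_one_eq_prod_range {M : Type*} [CommMonoid M] (f : ℕ → M) (m : ℕ) :
    ∏ i ∈ Icc 1 m, f i = ∏ i ∈ range m, f (i + 1) := by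
  rw [range_eq_Ico, prod_Ico_add' f 0 m 1, zero_add, Ico_add_one_right_eq_Icc]

theorem φ_ne_zero {p : P2} (hp : p ≠ 0) : φ p ≠ 0 :=
  (map_ne_zero_iff _ (IsFractionRing.injective P2 K)).mpr hp

theorem prod_Icc_L_div_L_eq_lnomD {d : ℕ} (hd : d ≠ 0) (a m : ℕ) :
    ∏ i ∈ Icc 1 m, L (d * a + d * i) / L (d * i) = lnomD d (a + m) m := by
  have hden : ∏ i ∈ Icc 1 m, L (d * i) = LFactD d m := by
    rw [prod_Icc_one_eq_prod_range, LFactD, lucasFactD, map_prod]; rfl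
  have hnum : LFactD d a * ∏ i ∈ Icc 1 m, L (d * a + d * i) = LFactD d (a + m) := by
    rw [prod_Icc_one_eq_prod_range, LFactD, LFactD, lucasFactD, lucasFactD, prod_range_add]
    simp only [map_mul, map_prod, L, mul_add, add_assoc]
  have ha : LFactD d a ≠ 0 := φ_ne_zero (lucasFactD_ne_zero hd a)
  rw [prod_div_distrib, hden, lnomD, Nat.add_sub_cancel, ← hnum]
  field_simp

def lucasCoxeterDPoly (m j : ℕ) : P2 :=
  lucas (2 * j + 3) * lucasnomialPoly 2 m (j + 1) +
    pt * lucas m * (lucas (m + 2) + pt * lucas m) * lucasnomialPoly 2 (m + 1) j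

theorem lucasCoxeterDPoly_mem_nonnegSubsemiring (m j : ℕ) :
    lucasCoxeterDPoly m j ∈ nonnegSubsemiring := by
  have hL := lucas_mem_nonnegSubsemiring
  have hB := lucasnomialPoly_mem_nonnegSubsemiring 2
  have ht := X_mem_nonnegSubsemiring 1
  exact add_mem (mul_mem (hL _) (hB _ _))
    (mul_mem (mul_mem (mul_mem ht (hL _)) (add_mem (hL _) (mul_mem ht (hL _)))) (hB _ _))

theorem lucas_mul_lucasFactD_two_eq (m j : ℕ) :
    lucas (2 * (j + 1) + (m + 1)) * lucasFactD 2 (j + 1 + m) =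
      lucasCoxeterDPoly m j * (lucas (m + 1) * lucasFactD 2 m * lucasFactD 2 (j + 1)) := by
  have e1 := lucasnomialPoly_mul_lucasFactD two_ne_zero m (j + 1)
  have e2 := lucasnomialPoly_mul_lucasFactD two_ne_zero (m + 1) j
  have e3 := lucas_add_succ (2 * (j + 1)) m
  have e4 := lucas_add_succ (m + 1) m
  have e5 := lucasFactD_succ 2 m
  have e6 := lucasFactD_succ 2 j
  unfold lucasCoxeterDPoly
  linear_combination (norm := ring_nf) lucasFactD 2 (j + 1 + m) * e3
    - lucas (2 * j + 3) * lucas (m + 1) * e1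
    + pt * lucas m * lucasnomialPoly 2 (m + 1) j * lucasFactD 2 m * lucasFactD 2 (j + 1) * e4
    - pt * lucas m * lucas (2 * (m + 1)) * lucasnomialPoly 2 (m + 1) j * lucasFactD 2 m * e6
    + pt * lucas m * lucas (2 * (j + 1)) * lucasnomialPoly 2 (m + 1) j * lucasFactD 2 j * e5
    - pt * lucas m * lucas (2 * (j + 1)) * e2

theorem L_div_mul_lnomD_two (m j : ℕ) :
    L (2 * (j + 1) + (m + 1)) / L (m + 1) * lnomD 2 (j + 1 + m) m = φ (lucasCoxeterDPoly m j) := by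
  have hden : L (m + 1) * (LFactD 2 m * LFactD 2 (j + 1)) ≠ 0 :=
    mul_ne_zero (φ_ne_zero (lucas_ne_zero m.succ_ne_zero)) <|
      mul_ne_zero (φ_ne_zero (lucasFactD_ne_zero two_ne_zero m))
        (φ_ne_zero (lucasFactD_ne_zero two_ne_zero (j + 1)))
  have key := congrArg φ (lucas_mul_lucasFactD_two_eq m j)
  simp only [map_mul] at key
  rw [lnomD, add_tsub_cancel_right, div_mul_div_comm, div_eq_iff hden]
  simp only [L, LFactD]
  linear_combination key

/-- for n ≥ 3, k ≥ 1, the Lucas–Coxeter–Fuss–Catalan analogue of D_n,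
({2k(n-1)+n}/{n}) Π_{i=1}^{n-1} {2k(n-1)+2i}/{2i}
  = ({(2k+1)n-2k}/{n}) {(k+1)(n-1):2 choose n-1:2},
lies in ℕ[s,t]. -/
theorem coxeterFussCatalan_D (n k : ℕ) (hn : 3 ≤ n) (hk : 1 ≤ k) :
    (L (2*k*(n-1)+n) / L n) *
        (∏ i ∈ Finset.Icc 1 (n-1), L (2*k*(n-1)+2*i) / L (2*i)) =
      (L ((2*k+1)*n-2*k) / L n) * lnomD 2 ((k+1)*(n-1)) (n-1) ∧
    ∃ p : P2, Nonneg p ∧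
      (L ((2*k+1)*n-2*k) / L n) * lnomD 2 ((k+1)*(n-1)) (n-1) = φ p := by
  obtain ⟨m, rfl⟩ : ∃ m, n = m + 1 := ⟨n - 1, by omega⟩
  obtain ⟨j, hj⟩ : ∃ j, k * m = j + 1 := Nat.exists_eq_add_one.mpr (Nat.mul_pos hk (by omega))
  have hnum : (2 * k + 1) * (m + 1) - 2 * k = 2 * (j + 1) + (m + 1) := by
    rw [← hj, Nat.sub_eq_of_eq_add]; ring
  have hsize : (k + 1) * m = j + 1 + m := by rw [← hj]; ring
  rw [add_tsub_cancel_right, mul_assoc 2 k m, hj, hnum, hsize, prod_Icc_L_div_L_eq_lnomD two_ne_zero,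
    L_div_mul_lnomD_two]
  exact ⟨rfl, _, lucasCoxeterDPoly_mem_nonnegSubsemiring m j, rfl⟩
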